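/- arXiv:2006.01466 — 2 statements merged into one kernel-verified Lean document; each statement's English description precedes it below -/
import Mathlib

section
/- For every P ∈ \widetilde{P}_n, the minimal representative [P] of P satisfies the Lipschitz condition SL3, i.e. [P] ∈ SL_n. In particular, if every state of P has finite extent of incomplete response and P' denotes the transducer with the same states and transitions as P but outputs λ'(a,q) = Λ(a,q) − Λ(ε,q), then for every state p and word Γ with π_{P'}(Γ, p) = p one has |λ'_{P'}(Γ, p)| = |Γ|. -/
/-!
Common definitions: transducers over a finite alphabet, strong synchronization,
cores, ω-equivalence, minimal representatives, the monoids `M_n`, `SL_n`, `SO_n`,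
the groups `O_n`, `L_n`, annotations, and the two-sided full shift.

Throughout, the alphabet is `Fin (n + 2)`, i.e. an alphabet of size `n + 2 ≥ 2`.
-/

namespace ShiftPaper

/-- The alphabet with `n + 2` letters. -/
abbrev A (n : ℕ) : Type := Fin (n + 2)

/-- Finite words over the alphabet. -/
abbrev Word (n : ℕ) : Type := List (A n)

/-- A transducer over the alphabet `A n`: a finite nonempty set of states together with a
transition function `tr` and an output function `out` (possibly asynchronous). -/
structure Transducer (n : ℕ) where
  Q : Type
  fin : Finite Q
  ne : Nonempty Q
  tr : A n → Q → Q
  out : A n → Q → Word n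

variable {n : ℕ}

instance (T : Transducer n) : Finite T.Q := T.fin
instance (T : Transducer n) : Nonempty T.Q := T.ne

/-- Extended transition function, reading a finite word from left to right. -/
def dsts (T : Transducer n) : Word n → T.Q → T.Q
  | [], q => q
  | a :: w, q => dsts T w (T.tr a q)

/-- Extended output function along a finite word. -/
def outs (T : Transducer n) : Word n → T.Q → Word n
  | [], _ => []
  | a :: w, q => T.out a q ++ outs T w (T.tr a q)

/-- Every (nonempty) circuit in the transducer has nonempty output. -/
def CircuitsNonempty (T : Transducer n) : Prop :=
  ∀ (q : T.Q) (w : Word n), w ≠ [] → dsts T w q = q → outs T w q ≠ []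

/-- `T` is synchronizing at level `k`: the state reached after reading any word of
length `k` does not depend on the starting state. -/
def SyncAt (T : Transducer n) (k : ℕ) : Prop :=
  ∀ w : Word n, w.length = k → ∀ p q : T.Q, dsts T w p = dsts T w q

/-- `T` is strongly synchronizing: synchronizing at some level. -/
def StronglySync (T : Transducer n) : Prop := ∃ k, SyncAt T k

/-- The minimal synchronizing level (junk value `0` if `T` is not strongly synchronizing). -/
noncomputable def syncLevel (T : Transducer n) : ℕ := by
  classical
  exact if h : StronglySync T then Nat.find h else 0

/-- The infinite output stream produced from state `q` on reading the infinite input `x`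
(the map `h_q`).  (Well defined on transducers all of whose circuits have nonempty
output; junk values otherwise.) -/
noncomputable def hmap (T : Transducer n) (q : T.Q) (x : ℕ → A n) : ℕ → A n := fun m => by
  classical
  exact if h : ∃ k, m < (outs T ((List.range k).map x) q).length then
    (outs T ((List.range h.choose).map x) q).getD m default
  else default

/-- ω-equality of transducers: a bijection of the state sets under which corresponding
states induce the same maps on infinite sequences. -/
def OmegaEq (T U : Transducer n) : Prop :=
  ∃ f : T.Q ≃ U.Q, ∀ q, hmap T q = hmap U (f q)

/-- The setoid on states given by ω-equivalence of states. -/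
def omegaSetoid (T : Transducer n) : Setoid T.Q :=
  ⟨fun p q => hmap T p = hmap T q, ⟨fun _ => rfl, fun h => h.symm, fun h h' => h.trans h'⟩⟩

/-- The transducer obtained by identifying ω-equivalent states. -/
noncomputable def quotT (T : Transducer n) : Transducer n where
  Q := Quotient (omegaSetoid T)
  fin := Finite.of_surjective (Quotient.mk (omegaSetoid T))
    fun c => ⟨Quotient.out c, Quotient.out_eq c⟩
  ne := ⟨Quotient.mk (omegaSetoid T) (Classical.choice T.ne)⟩
  tr := fun a c => Quotient.mk (omegaSetoid T) (T.tr a (Quotient.out c))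
  out := fun a c => T.out a (Quotient.out c)

/-- `q` is a state of the core of `T`: it is forced by some word whose length is a
synchronizing level of `T`. -/
def CoreState (T : Transducer n) (q : T.Q) : Prop :=
  ∃ (k : ℕ) (w : Word n), SyncAt T k ∧ w.length = k ∧ ∀ p, dsts T w p = q

/-- `T` is core: it equals its core. -/
def IsCore (T : Transducer n) : Prop := ∀ q : T.Q, CoreState T q

/-- Auxiliary predicate used to make the core construction total. -/
def CoreStateE (T : Transducer n) (q : T.Q) : Prop :=
  CoreState T q ∨ ∀ p, ¬ CoreState T p

/-- The core of `T` (as a transducer). -/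
noncomputable def coreT (T : Transducer n) : Transducer n where
  Q := {q : T.Q // CoreStateE T q}
  fin := Subtype.finite
  ne := by
    classical
    by_cases h : ∀ p, ¬ CoreState T p
    · exact ⟨⟨Classical.choice T.ne, Or.inr h⟩⟩
    · push_neg at h
      obtain ⟨p, hp⟩ := h
      exact ⟨⟨p, Or.inl hp⟩⟩
  tr := fun a q => by
    classical
    exact if h : CoreStateE T (T.tr a q.1) then ⟨T.tr a q.1, h⟩ else q
  out := fun a q => T.out a q.1

/-- There exist two inputs whose outputs from `q` disagree at position `j`. -/
def Disagree (T : Transducer n) (q : T.Q) (j : ℕ) : Prop :=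
  ∃ x y : ℕ → A n, hmap T q x j ≠ hmap T q y j

/-- The extent of incomplete response of `q` (the length of `Λ(ε,q)`) is finite. -/
def FiniteExtent (T : Transducer n) (q : T.Q) : Prop := ∃ j, Disagree T q j

/-- The extent of incomplete response `|Λ(ε,q)|` of the state `q`
(junk value `0` when it is infinite). -/
noncomputable def extentLen (T : Transducer n) (q : T.Q) : ℕ := by
  classical
  exact if h : FiniteExtent T q then Nat.find h else 0

/-- The word `Λ(ε,q)`: the greatest common prefix of all outputs from `q`. -/
noncomputable def extentWord (T : Transducer n) (q : T.Q) : Word n :=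
  (List.range (extentLen T q)).map (hmap T q fun _ => default)

/-- `T` has no states of incomplete response (`Λ(ε,q) = ε` for every state `q`). -/
def NoIncomplete (T : Transducer n) : Prop := ∀ q : T.Q, Disagree T q 0

/-- No two distinct states of `T` are ω-equivalent. -/
def WeaklyMinimal (T : Transducer n) : Prop :=
  ∀ p q : T.Q, hmap T p = hmap T q → p = q

/-- The Lipschitz condition (SL3): around any circuit the output is as long as the input. -/
def SL3 (T : Transducer n) : Prop :=
  ∀ (q : T.Q) (Γ : Word n), dsts T Γ q = q → (outs T Γ q).length = Γ.length

/-- `T` is synchronous: it writes exactly one letter for each letter read. -/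
def Synchronous (T : Transducer n) : Prop :=
  ∀ (a : A n) (q : T.Q), (T.out a q).length = 1

/-- Boolean lexicographic comparison of words. -/
def lexLtB : Word n → Word n → Bool
  | [], [] => false
  | [], _ :: _ => true
  | _ :: _, [] => false
  | a :: u, b :: v => if a < b then true else if b < a then false else lexLtB u v

/-- The lexicographically least rotation of a word. -/
def minimalRot (w : Word n) : Word n :=
  ((List.range w.length).map fun i => w.rotate i).foldl
    (fun acc r => if lexLtB r acc then r else acc) w

/-- A nonempty word is prime if it is not a power of a strictly shorter word. -/
def IsPrime (w : Word n) : Prop :=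
  w ≠ [] ∧ ∀ (u : Word n) (k : ℕ), w = (List.replicate k u).flatten → w.length ≤ u.length

/-- `v` is a rotation of `u`. -/
def RotEq (u v : Word n) : Prop := ∃ i : ℕ, v = u.rotate i

/-- The prime word of which the (eventually constant single) image point of `T` is a power
(used for the degenerate transducers `Z_x`; junk values otherwise). -/
noncomputable def periodicRoot (T : Transducer n) : Word n := by
  classical
  exact
    if hp : ∃ m, 0 < m ∧ ∀ j, hmap T (Classical.choice T.ne) (fun _ => default) (j + m) =
        hmap T (Classical.choice T.ne) (fun _ => default) j
    then (List.range (Nat.find hp)).map (hmap T (Classical.choice T.ne) fun _ => default)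
    else [default]

/-- Remove the incomplete response from the states of `T`: replace the output `λ(a,q)` by
`Λ(a,q) - Λ(ε,q)`.  (In the degenerate case where the extents of incomplete response are
infinite, all outputs are replaced by the minimal rotation of the prime root of the unique
image point, so that minimising produces the transducer `Z_x` of the paper.) -/
noncomputable def removeIncomplete (T : Transducer n) : Transducer n where
  Q := T.Q
  fin := T.fin
  ne := T.ne
  tr := T.tr
  out := fun a q => by
    classical
    exact if ∀ p : T.Q, FiniteExtent T p then
      (T.out a q ++ extentWord T (T.tr a q)).drop (extentLen T q)
    else minimalRot (periodicRoot T)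

/-- The minimal representative `[T]` of a strongly synchronizing core transducer `T`:
remove incomplete response, take the core, and identify ω-equivalent states. -/
noncomputable def minRep (T : Transducer n) : Transducer n :=
  quotT (coreT (removeIncomplete T))

/-- The single state transducer `Z_x` which outputs `x` on every input letter. -/
def Zword (x : Word n) : Transducer n where
  Q := PUnit
  fin := inferInstance
  ne := ⟨PUnit.unit⟩
  tr := fun _ q => q
  out := fun _ _ => x

/-- The single state identity transducer. -/
def oneT : Transducer n where
  Q := PUnit
  fin := inferInstance
  ne := ⟨PUnit.unit⟩
  tr := fun _ q => q
  out := fun a _ => [a]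

/-- The product transducer `T * U`: the outputs of `T` are processed by `U`. -/
noncomputable def prodT (T U : Transducer n) : Transducer n where
  Q := T.Q × U.Q
  fin := inferInstance
  ne := ⟨⟨Classical.choice T.ne, Classical.choice U.ne⟩⟩
  tr := fun a p => (T.tr a p.1, dsts U (T.out a p.1) p.2)
  out := fun a p => outs U (T.out a p.1) p.2

/-- The product in `M_n`: the minimal representative of the core of `T * U`. -/
noncomputable def mulT (T U : Transducer n) : Transducer n :=
  minRep (coreT (prodT T U))

/-- Membership in the monoid `M_n` of minimal, strongly synchronizing, core transducers
(a transducer is minimal if it is core, has no states of incomplete response and no two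
distinct ω-equivalent states, or it is one of the degenerate transducers `Z_x` for a prime
word `x` which is least in its rotation class). -/
def MnMem (T : Transducer n) : Prop :=
  CircuitsNonempty T ∧ StronglySync T ∧ IsCore T ∧
    ((NoIncomplete T ∧ WeaklyMinimal T) ∨
      ∃ x : Word n, IsPrime x ∧ minimalRot x = x ∧ OmegaEq T (Zword x))

/-- Membership in the monoid `SL_n`: elements of `M_n` satisfying the Lipschitz condition. -/
def SLnMem (T : Transducer n) : Prop := MnMem T ∧ SL3 T

/-- Membership in the monoid `SO_n`: elements of `M_n` all of whose states induce injective
maps with clopen image. -/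
def SOnMem (T : Transducer n) : Prop :=
  MnMem T ∧ ∀ q : T.Q, Function.Injective (hmap T q) ∧ IsClopen (Set.range (hmap T q))

/-- Membership in the group `O_n`: invertible elements of `SO_n` (with inverse in `SO_n`);
equality in `M_n` is ω-equality. -/
def OnMem (T : Transducer n) : Prop :=
  SOnMem T ∧ ∃ U : Transducer n, SOnMem U ∧ OmegaEq (mulT T U) oneT ∧ OmegaEq (mulT U T) oneT

/-- Membership in the group `L_n = O_n ∩ SL_n`. -/
def LnMem (T : Transducer n) : Prop := OnMem T ∧ SL3 T

/-- Membership in the monoid `\widetilde{P}_n` of weakly minimal, synchronous, strongly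
synchronizing core transducers. -/
def PtildeMem (T : Transducer n) : Prop :=
  CircuitsNonempty T ∧ StronglySync T ∧ IsCore T ∧ Synchronous T ∧ WeaklyMinimal T

/-- The product in `\widetilde{P}_n`: take the product transducer, identify ω-equivalent
states and take the core. -/
noncomputable def ptildeMul (P R : Transducer n) : Transducer n :=
  coreT (quotT (prodT P R))

/-- An annotation of (a strongly synchronizing core transducer satisfying the Lipschitz
condition) `T`. -/
def Annotation (T : Transducer n) (α : T.Q → ℤ) : Prop :=
  ∀ (q : T.Q) (Γ : Word n),
    α (dsts T Γ q) = α q + ((outs T Γ q).length : ℤ) - (Γ.length : ℤ)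

/-! ### The two-sided full shift -/

/-- The space of bi-infinite sequences over the alphabet `A n`. -/
abbrev FullShift (n : ℕ) : Type := ℤ → A n

/-- The `i`-th power of the shift map: `(shiftZ i x) j = x (j - i)`.
The shift `σ` itself is `shiftZ 1`. -/
def shiftZ (i : ℤ) (x : FullShift n) : FullShift n := fun j => x (j - i)

/-- The monoid of endomorphisms of the shift dynamical system: continuous maps on the
space of bi-infinite sequences commuting with the shift. -/
def EndShift (n : ℕ) : Type :=
  {f : FullShift n → FullShift n // Continuous f ∧ ∀ x, f (shiftZ 1 x) = shiftZ 1 (f x)}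

/-- The group of automorphisms of the shift dynamical system: homeomorphisms of the
space of bi-infinite sequences commuting with the shift. -/
def AutShift (n : ℕ) : Type :=
  {f : FullShift n → FullShift n // Continuous f ∧ (∀ x, f (shiftZ 1 x) = shiftZ 1 (f x)) ∧
    ∃ g : FullShift n → FullShift n, Continuous g ∧ (∀ x, g (f x) = x) ∧ ∀ x, f (g x) = x}

/-- The window `x_{i-k} … x_{i-1}` of a bi-infinite sequence. -/
def window (x : FullShift n) (i : ℤ) (k : ℕ) : Word n :=
  (List.range k).map fun j => x (i - (k : ℤ) + (j : ℤ))

/-- The state of `L` forced by the window `x_{i-k} … x_{i-1}`. -/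
noncomputable def forced (L : Transducer n) (k : ℕ) (x : FullShift n) (i : ℤ) : L.Q :=
  dsts L (window x i k) (Classical.choice L.ne)

/-- The output word written while processing the letter `x i`. -/
noncomputable def outAt (L : Transducer n) (k : ℕ) (x : FullShift n) (i : ℤ) : Word n :=
  L.out (x i) (forced L k x i)

/-- The defining specification of the map `(L, α) : X_n^ℤ → X_n^ℤ` induced by an annotated
transducer: for each index `i`, with `q` the state forced by `x_{i-k} … x_{i-1}` and
`w = λ(x_i, q)`, the word `w` occupies the coordinates `i + α q, …, i + α q + |w| - 1`
of the image sequence `y`. -/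
def SpecAt (L : Transducer n) (α : L.Q → ℤ) (k : ℕ) (x y : FullShift n) : Prop :=
  ∀ (i : ℤ) (j : ℕ), j < (outAt L k x i).length →
    y (i + α (forced L k x i) + (j : ℤ)) = (outAt L k x i).getD j default

/-- The map `(L, α) : X_n^ℤ → X_n^ℤ` induced by an annotated transducer. -/
noncomputable def inducedMap (L : Transducer n) (α : L.Q → ℤ) (k : ℕ) :
    FullShift n → FullShift n := fun x m => by
  classical
  exact if h : ∃ p : ℤ × ℕ, p.2 < (outAt L k x p.1).length ∧
      p.1 + α (forced L k x p.1) + (p.2 : ℤ) = m then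
    (outAt L k x h.choose.1).getD h.choose.2 default
  else default

/-- The map `κ` from the states of `T` to the states of its minimal representative. -/
noncomputable def kappa (T : Transducer n) (q : T.Q) : (minRep T).Q := by
  classical
  exact Quotient.mk (omegaSetoid (coreT (removeIncomplete T)))
    (if h : CoreStateE (removeIncomplete T) q then
      (⟨q, h⟩ : (coreT (removeIncomplete T)).Q)
    else Classical.choice (coreT (removeIncomplete T)).ne)

/-- The annotation `\overline{α + β}` of the product `LM` in `SL_n`: its value at the
state `κ (s, t)` is `α s + β t + |Λ(ε, (s,t))|`, the extent of incomplete response being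
computed in `core (L * M)`. -/
noncomputable def annProd (L M : Transducer n) (α : L.Q → ℤ) (β : M.Q → ℤ) :
    (mulT L M).Q → ℤ := fun c =>
  α (Quotient.out c).1.1.1 + β (Quotient.out c).1.1.2 +
    (extentLen (coreT (prodT L M)) (Quotient.out c).1 : ℤ)

/-- The set `ASL_n` of annotated transducers: pairs of a transducer and an integer-valued
function on its states. -/
def ASLPair (n : ℕ) := Σ T : Transducer n, T.Q → ℤ

/-- Membership in `ASL_n`: either the transducer is in `SL_n` with no states of incomplete
response and the function is an annotation of it, or it is a degenerate `Z_a` for a letter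
`a` (whose `annotation ∞` we model by allowing an arbitrary function). -/
def ASLMem (p : ASLPair n) : Prop :=
  (SLnMem p.1 ∧ NoIncomplete p.1 ∧ Annotation p.1 p.2) ∨ ∃ a : A n, OmegaEq p.1 (Zword [a])

/-- Equality in `ASL_n`: ω-equality of the transducers matching up the annotations, with
the two elements possibly both being the degenerate `(Z_a, ∞)` for the same letter `a`. -/
def ASLEq (p q : ASLPair n) : Prop :=
  (∃ f : p.1.Q ≃ q.1.Q, (∀ s, hmap p.1 s = hmap q.1 (f s)) ∧ ∀ s, q.2 (f s) = p.2 s) ∨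
    ∃ a : A n, OmegaEq p.1 (Zword [a]) ∧ OmegaEq q.1 (Zword [a])

/-- The product on `ASL_n`: `(L, α)(M, β) = (LM, \overline{α + β})`. -/
noncomputable def ASLmul (p q : ASLPair n) : ASLPair n :=
  ⟨mulT p.1 q.1, annProd p.1 q.1 p.2 q.2⟩

/-- The identity `(1, 0)` of `ASL_n`. -/
def ASLone : ASLPair n := ⟨oneT, fun _ => 0⟩

/-- Membership in `AL_n`: annotated elements of `L_n`. -/
def ALMem (p : ASLPair n) : Prop := LnMem p.1 ∧ Annotation p.1 p.2

/-- The element `([P], α)` of `ASL_n` with `α ((q) κ) = i + |Λ(ε, q)|`, associated to the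
endomorphism `σ^i ∘ f_P`. -/
noncomputable def phiPair (P : Transducer n) (i : ℤ) : ASLPair n :=
  ⟨minRep P, fun c => i + (extentLen P (Quotient.out c).1 : ℤ)⟩

/-- The unique state at the base of a circuit labelled `Γ` (junk value if there is none). -/
noncomputable def qcirc (T : Transducer n) (Γ : Word n) : T.Q := by
  classical
  exact if h : ∃ q, dsts T Γ q = q then h.choose else Classical.choice T.ne

/-- The prime root of a word: the prime word of which `w` is a power
(junk value `w` if there is none). -/
noncomputable def primeRoot (w : Word n) : Word n := by
  classical
  exact if h : ∃ u : Word n, IsPrime u ∧ ∃ k, w = (List.replicate k u).flatten then h.choose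
  else w

/-- The action of `T ∈ M_n` on (rotation classes of) prime words: `Γ` is sent to the prime
word of which `λ(Γ, q_Γ)` is a power, where `q_Γ` is the unique state with a circuit
labelled `Γ` based at it. -/
noncomputable def PiAct (T : Transducer n) (Γ : Word n) : Word n :=
  primeRoot (outs T Γ (qcirc T Γ))

/-- The cylinder set of one-sided infinite sequences with prefix `ν`. -/
def Cyl (ν : Word n) : Set (ℕ → A n) :=
  {x | ∀ (j : ℕ) (h : j < ν.length), x j = ν.get ⟨j, h⟩}

/-- `m_q = |B(q)|`: the least cardinality of a finite set of words whose cylinders are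
contained in, and together cover, the image of `h_q`. -/
noncomputable def mq (T : Transducer n) (q : T.Q) : ℕ :=
  sInf {m : ℕ | ∃ S : Finset (Word n), S.card = m ∧
    (∀ ν ∈ S, Cyl ν ⊆ Set.range (hmap T q)) ∧
    (⋃ ν ∈ S, Cyl ν) = Set.range (hmap T q)}

/-- The signature homomorphism `sig : O_n → (ℤ/(n-1))^×`, as an element of `ℤ/(n-1)`
(for our alphabet of size `n + 2`, the modulus is `n + 1`). -/
noncomputable def sigT (T : Transducer n) : ZMod (n + 1) :=
  (mq T (Classical.choice T.ne) : ZMod (n + 1))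

/-!
If every state of `P` has finite extent of incomplete response, then along a word `w` read from
`q` the synchronous `P` writes `|w|` letters, while `P'` writes
`|w| + |Λ(ε, π(w, q))| - |Λ(ε, q)|` letters; around a circuit the two extents cancel. `P'` has no
states of incomplete response, so ω-equivalence is a congruence for it, and SL3 survives taking
the core and then the quotient by ω-equivalence.

If some state has infinite extent, its output does not depend on the input. Since `P` is core,
the same holds for every state, and comparing states through forcing words of equal length shows
that all states write one constant stream `c c c …`. Then `[P]` is the one-state transducer
`Z_[c]`.
-/

section Words

variable (T : Transducer n)

lemma dsts_append (u v : Word n) (q : T.Q) :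
    dsts T (u ++ v) q = dsts T v (dsts T u q) := by
  induction u generalizing q with
  | nil => rfl
  | cons a u ih => exact ih (T.tr a q)

lemma outs_append (u v : Word n) (q : T.Q) :
    outs T (u ++ v) q = outs T u q ++ outs T v (dsts T u q) := by
  induction u generalizing q with
  | nil => rfl
  | cons a u ih => simp [outs, dsts, ih, List.append_assoc]

lemma outs_singleton (a : A n) (q : T.Q) : outs T [a] q = T.out a q :=
  List.append_nil _

lemma length_outs_of_synchronous (hT : Synchronous T) (w : Word n) (q : T.Q) :
    (outs T w q).length = w.length := by
  induction w generalizing q with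
  | nil => rfl
  | cons a w ih => simp [outs, hT a q, ih, Nat.add_comm]

lemma dsts_flatten_replicate (Γ : Word n) (m : ℕ) (q : T.Q) :
    dsts T (List.replicate m Γ).flatten q = (dsts T Γ)^[m] q := by
  induction m generalizing q with
  | zero => rfl
  | succ m ih =>
    rw [List.replicate_succ, List.flatten_cons, dsts_append, ih, Function.iterate_succ_apply]

lemma length_outs_flatten_replicate {Γ : Word n} {ℓ : ℕ} {q : T.Q}
    (hℓ : ∀ t, (outs T Γ ((dsts T Γ)^[t] q)).length = ℓ) (m : ℕ) :
    (outs T (List.replicate m Γ).flatten q).length = m * ℓ := by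
  induction m generalizing q with
  | zero => simp [outs]
  | succ m ih =>
    have hnext : ∀ t, (outs T Γ ((dsts T Γ)^[t] (dsts T Γ q))).length = ℓ := fun t => by
      rw [← Function.iterate_succ_apply]; exact hℓ (t + 1)
    rw [List.replicate_succ, List.flatten_cons, outs_append, List.length_append, ih hnext,
      show (outs T Γ q).length = ℓ from hℓ 0, Nat.succ_mul, Nat.add_comm]

end Words

section Streams

variable (T : Transducer n)

def prepend (w : Word n) (x : ℕ → A n) : ℕ → A n :=
  fun i => if h : i < w.length then w[i] else x (i - w.length)

lemma map_range_prepend (w : Word n) (x : ℕ → A n) (k : ℕ) :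
    (List.range (w.length + k)).map (prepend w x) = w ++ (List.range k).map x := by
  refine List.ext_getElem (by simp) fun i _ _ => ?_
  simp only [List.getElem_map, List.getElem_range, prepend]
  split_ifs with h
  · rw [List.getElem_append_left h]
  · rw [List.getElem_append_right (not_lt.mp h)]
    simp

lemma outs_map_range_prefix (x : ℕ → A n) (q : T.Q) {k k' : ℕ} (h : k ≤ k') :
    outs T ((List.range k).map x) q <+: outs T ((List.range k').map x) q := by
  induction k', h using Nat.le_induction with
  | base => exact List.prefix_rfl
  | succ k' _ ih =>
    rw [List.range_succ, List.map_append, outs_append]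
    exact ih.trans (List.prefix_append _ _)

lemma hmap_eq_getD {q : T.Q} {x : ℕ → A n} {m k : ℕ}
    (hk : m < (outs T ((List.range k).map x) q).length) :
    hmap T q x m = (outs T ((List.range k).map x) q).getD m default := by
  have hex : ∃ k, m < (outs T ((List.range k).map x) q).length := ⟨k, hk⟩
  unfold hmap
  rw [dif_pos hex, List.getD_eq_getElem _ _ hex.choose_spec, List.getD_eq_getElem _ _ hk]
  rcases le_total hex.choose k with h | h
  · exact (outs_map_range_prefix T x q h).getElem hex.choose_spec
  · exact ((outs_map_range_prefix T x q h).getElem hk).symm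

lemma hmap_eq_default {q : T.Q} {x : ℕ → A n} {m : ℕ}
    (h : ∀ k, (outs T ((List.range k).map x) q).length ≤ m) : hmap T q x m = default := by
  unfold hmap
  exact dif_neg fun ⟨k, hk⟩ => (h k).not_gt hk

lemma hmap_eq_of_outs_eq (U : Transducer n) (q : T.Q) (q' : U.Q)
    (h : ∀ w, outs T w q = outs U w q') : hmap T q = hmap U q' := by
  funext x m
  by_cases hex : ∃ k, m < (outs T ((List.range k).map x) q).length
  · obtain ⟨k, hk⟩ := hex
    rw [hmap_eq_getD T hk, hmap_eq_getD U (h _ ▸ hk), h]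
  · simp only [not_exists, not_lt] at hex
    rw [hmap_eq_default T hex, hmap_eq_default U fun k => h _ ▸ hex k]

lemma hmap_prepend (w : Word n) (x : ℕ → A n) (q : T.Q) (m : ℕ) :
    hmap T q (prepend w x) ((outs T w q).length + m) = hmap T (dsts T w q) x m := by
  have hsplit : ∀ k, outs T ((List.range (w.length + k)).map (prepend w x)) q =
      outs T w q ++ outs T ((List.range k).map x) (dsts T w q) := fun k => by
    rw [map_range_prepend, outs_append]
  by_cases hex : ∃ k, m < (outs T ((List.range k).map x) (dsts T w q)).length
  · obtain ⟨k, hk⟩ := hex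
    rw [hmap_eq_getD T hk, hmap_eq_getD T (k := w.length + k)
      (by rw [hsplit, List.length_append]; omega), hsplit,
      List.getD_append_right _ _ _ _ (by omega), Nat.add_sub_cancel_left]
  · simp only [not_exists, not_lt] at hex
    refine (hmap_eq_default T fun k => ?_).trans (hmap_eq_default T hex).symm
    have hle := (outs_map_range_prefix T (prepend w x) q (Nat.le_add_left k w.length)).length_le
    rw [hsplit, List.length_append] at hle
    have := hex k
    omega

lemma getElem_outs_eq_hmap (w : Word n) (q : T.Q) (x : ℕ → A n) (i : ℕ)
    (hi : i < (outs T w q).length) : (outs T w q)[i] = hmap T q (prepend w x) i := by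
  have hw : (List.range w.length).map (prepend w x) = w := by
    simpa using map_range_prepend w x 0
  rw [hmap_eq_getD T (k := w.length) (by rwa [hw]), hw, List.getD_eq_getElem _ _ hi]

end Streams

section Extent

variable (T : Transducer n) {q : T.Q}

lemma disagree_extentLen (h : FiniteExtent T q) : Disagree T q (extentLen T q) := by
  classical
  unfold extentLen
  rw [dif_pos h]
  exact Nat.find_spec h

lemma hmap_eq_hmap_of_lt_extentLen (h : FiniteExtent T q) {j : ℕ} (hj : j < extentLen T q)
    (x y : ℕ → A n) : hmap T q x j = hmap T q y j := by
  classical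
  unfold extentLen at hj
  rw [dif_pos h] at hj
  by_contra hne
  exact Nat.find_min h hj ⟨x, y, hne⟩

lemma extentLen_le_of_disagree {j : ℕ} (h : Disagree T q j) : extentLen T q ≤ j := by
  classical
  unfold extentLen
  rw [dif_pos ⟨j, h⟩]
  exact Nat.find_min' _ h

lemma length_extentWord : (extentWord T q).length = extentLen T q := by
  simp [extentWord]

lemma getElem_extentWord (i : ℕ) (h : i < (extentWord T q).length) :
    (extentWord T q)[i] = hmap T q (fun _ => default) i := by
  simp [extentWord]

lemma disagree_of_disagree_dsts (w : Word n) {j : ℕ} (h : Disagree T (dsts T w q) j) :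
    Disagree T q ((outs T w q).length + j) := by
  obtain ⟨x, y, hxy⟩ := h
  exact ⟨prepend w x, prepend w y, by rwa [hmap_prepend, hmap_prepend]⟩

lemma extentLen_le_length_outs_add (w : Word n) (h : FiniteExtent T (dsts T w q)) :
    extentLen T q ≤ (outs T w q).length + extentLen T (dsts T w q) :=
  extentLen_le_of_disagree T (disagree_of_disagree_dsts T w (disagree_extentLen T h))

lemma extentWord_prefix (w : Word n) (hq : FiniteExtent T q) (hw : FiniteExtent T (dsts T w q)) :
    extentWord T q <+: outs T w q ++ extentWord T (dsts T w q) := by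
  have hle := extentLen_le_length_outs_add T w hw
  refine List.prefix_iff_getElem.2 ⟨by simp [length_extentWord, hle], fun i hi => ?_⟩
  have hi' : i < extentLen T q := length_extentWord T ▸ hi
  rw [getElem_extentWord, hmap_eq_hmap_of_lt_extentLen T hq hi' _ (prepend w fun _ => default)]
  by_cases hc : i < (outs T w q).length
  · rw [List.getElem_append_left hc, getElem_outs_eq_hmap]
  · rw [List.getElem_append_right (not_lt.mp hc), getElem_extentWord, ← hmap_prepend,
      Nat.add_sub_cancel' (not_lt.mp hc)]

end Extent

section RemoveIncomplete

variable {P : Transducer n}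

lemma dsts_removeIncomplete (w : Word n) (q : P.Q) :
    dsts (removeIncomplete P) w q = dsts P w q := by
  induction w generalizing q with
  | nil => rfl
  | cons a w ih => exact ih (P.tr a q)

variable (hfin : ∀ q, FiniteExtent P q)
include hfin

lemma out_removeIncomplete (a : A n) (q : P.Q) :
    (removeIncomplete P).out a q =
      (P.out a q ++ extentWord P (P.tr a q)).drop (extentLen P q) :=
  if_pos hfin

lemma outs_removeIncomplete (w : Word n) (q : P.Q) :
    outs (removeIncomplete P) w q =
      (outs P w q ++ extentWord P (dsts P w q)).drop (extentLen P q) := by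
  induction w generalizing q with
  | nil => exact (List.drop_of_length_le (length_extentWord P).le).symm
  | cons a w ih =>
    obtain ⟨r, hr⟩ := extentWord_prefix P w (hfin _) (hfin (dsts P w (P.tr a q)))
    have hle : extentLen P q ≤ (P.out a q).length + extentLen P (P.tr a q) := by
      have := extentLen_le_length_outs_add P [a] (q := q) (hfin _)
      rw [outs_singleton] at this
      exact this
    change (removeIncomplete P).out a q ++ outs (removeIncomplete P) w (P.tr a q) =
      (P.out a q ++ outs P w (P.tr a q) ++ extentWord P (dsts P w (P.tr a q))).drop _
    rw [out_removeIncomplete hfin, ih, List.append_assoc, ← hr, ← List.append_assoc,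
      List.drop_append_of_le_length (l₁ := P.out a q ++ extentWord P (P.tr a q))
        (by rwa [List.length_append, length_extentWord]),
      ← length_extentWord P (q := P.tr a q), List.drop_left]

lemma length_outs_removeIncomplete_add (w : Word n) (q : P.Q) :
    (outs (removeIncomplete P) w q).length + extentLen P q =
      (outs P w q).length + extentLen P (dsts P w q) := by
  rw [outs_removeIncomplete hfin, List.length_drop, List.length_append, length_extentWord]
  have := extentLen_le_length_outs_add P w (q := q) (hfin _)
  omega

lemma sl3_removeIncomplete (hsyn : Synchronous P) : SL3 (removeIncomplete P) := by
  intro q Γ hΓ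
  have hlen := length_outs_removeIncomplete_add hfin Γ q
  rw [(dsts_removeIncomplete (P := P) Γ q).symm.trans hΓ] at hlen
  have := length_outs_of_synchronous P hsyn Γ q
  omega

lemma hmap_removeIncomplete (hsyn : Synchronous P) (q : P.Q) (x : ℕ → A n) (m : ℕ) :
    hmap (removeIncomplete P) q x m = hmap P q x (extentLen P q + m) := by
  have hW : (outs P ((List.range (extentLen P q + m + 1)).map x) q).length =
      extentLen P q + m + 1 := by
    simp [length_outs_of_synchronous P hsyn]
  have hlen := length_outs_removeIncomplete_add hfin ((List.range (extentLen P q + m + 1)).map x) q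
  rw [hmap_eq_getD (removeIncomplete P) (q := q) (k := extentLen P q + m + 1) (by omega),
    hmap_eq_getD P (k := extentLen P q + m + 1) (by omega), outs_removeIncomplete hfin]
  simp only [List.getD_eq_getElem?_getD, List.getElem?_drop,
    List.getElem?_append_left (show extentLen P q + m <
      (outs P ((List.range (extentLen P q + m + 1)).map x) q).length by omega)]

lemma noIncomplete_removeIncomplete (hsyn : Synchronous P) : NoIncomplete (removeIncomplete P) := by
  intro q
  obtain ⟨x, y, hxy⟩ := disagree_extentLen P (hfin q)
  exact ⟨x, y, by rwa [hmap_removeIncomplete hfin hsyn q x, hmap_removeIncomplete hfin hsyn q y]⟩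

end RemoveIncomplete

section Transfer

variable {T U : Transducer n} (f : T.Q → U.Q) (hf : Function.Surjective f)
  (hdsts : ∀ w q, f (dsts T w q) = dsts U w (f q))
include hf hdsts

lemma SyncAt.of_surjective {k : ℕ} (h : SyncAt T k) : SyncAt U k := by
  intro w hw p' q'
  obtain ⟨p, rfl⟩ := hf p'
  obtain ⟨q, rfl⟩ := hf q'
  rw [← hdsts, ← hdsts, h w hw]

lemma IsCore.of_surjective (h : IsCore T) : IsCore U := by
  intro q'
  obtain ⟨q, rfl⟩ := hf q'
  obtain ⟨k, w, hk, hw, hq⟩ := h q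
  refine ⟨k, w, hk.of_surjective f hf hdsts, hw, fun p' => ?_⟩
  obtain ⟨p, rfl⟩ := hf p'
  rw [← hdsts, hq]

end Transfer

lemma IsCore.stronglySync {T : Transducer n} (h : IsCore T) : StronglySync T :=
  let ⟨k, _, hk, _⟩ := h (Classical.arbitrary T.Q)
  ⟨k, hk⟩

lemma SL3.circuitsNonempty {T : Transducer n} (h : SL3 T) : CircuitsNonempty T :=
  fun q w hw hq hnil => hw (List.length_eq_zero_iff.mp (by rw [← h q w hq, hnil, List.length_nil]))

section Core

variable {T : Transducer n} (hT : IsCore T)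
include hT

lemma coreT_tr (a : A n) (s : (coreT T).Q) :
    (coreT T).tr a s = ⟨T.tr a s.1, Or.inl (hT _)⟩ :=
  dif_pos _

lemma coreT_dsts (w : Word n) (s : (coreT T).Q) :
    dsts (coreT T) w s = ⟨dsts T w s.1, Or.inl (hT _)⟩ := by
  induction w generalizing s with
  | nil => rfl
  | cons a w ih => exact (congrArg (dsts (coreT T) w) (coreT_tr hT a s)).trans (ih _)

lemma coreT_outs (w : Word n) (s : (coreT T).Q) : outs (coreT T) w s = outs T w s.1 := by
  induction w generalizing s with
  | nil => rfl
  | cons a w ih =>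
    exact congrArg (T.out a s.1 ++ ·)
      ((congrArg (outs (coreT T) w) (coreT_tr hT a s)).trans (ih _))

lemma coreT_hmap (s : (coreT T).Q) : hmap (coreT T) s = hmap T s.1 :=
  hmap_eq_of_outs_eq _ _ _ _ fun w => coreT_outs hT w s

lemma isCore_coreT : IsCore (coreT T) :=
  hT.of_surjective (fun q => ⟨q, Or.inl (hT q)⟩) (fun s => ⟨s.1, rfl⟩)
    fun w q => (coreT_dsts hT w ⟨q, _⟩).symm

lemma noIncomplete_coreT (h : NoIncomplete T) : NoIncomplete (coreT T) := fun s => by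
  simpa only [Disagree, coreT_hmap hT] using h s.1

lemma sl3_coreT (h : SL3 T) : SL3 (coreT T) := fun s Γ hΓ => by
  rw [coreT_outs hT]
  exact h s.1 Γ (congrArg Subtype.val ((coreT_dsts hT Γ s).symm.trans hΓ))

end Core

section Quotient

/-- `quotT C` reads outputs and transitions off arbitrary representatives of the classes; this
condition makes the choice irrelevant. -/
def OmegaCongruence (C : Transducer n) : Prop :=
  ∀ p q : C.Q, hmap C p = hmap C q → ∀ a : A n,
    C.out a p = C.out a q ∧ hmap C (C.tr a p) = hmap C (C.tr a q)

variable {C : Transducer n}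

/-- A letter written from `p` but not from the ω-equivalent `q` would be an incomplete response
of `C.tr a p`. -/
lemma omegaCongruence_of_noIncomplete (hC : NoIncomplete C) : OmegaCongruence C := by
  intro p q hpq a
  have shift (r : C.Q) (y : ℕ → A n) (m : ℕ) :
      hmap C r (prepend [a] y) ((C.out a r).length + m) = hmap C (C.tr a r) y m := by
    simpa only [outs_singleton, dsts] using hmap_prepend C [a] y r m
  have letter (r : C.Q) (y : ℕ → A n) (j : ℕ) (hj : j < (C.out a r).length) :
      (C.out a r)[j] = hmap C r (prepend [a] y) j := by
    simpa only [outs_singleton] using getElem_outs_eq_hmap C [a] r y j (by rwa [outs_singleton])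
  have not_shorter (r r' : C.Q) (hr : hmap C r = hmap C r') :
      ¬ (C.out a r).length < (C.out a r').length := by
    intro hlt
    obtain ⟨x, y, hxy⟩ := hC (C.tr a r)
    apply hxy
    rw [← shift r x 0, ← shift r y 0, hr, add_zero, ← letter r' x _ hlt, ← letter r' y _ hlt]
  have hlen : (C.out a p).length = (C.out a q).length :=
    le_antisymm (not_lt.mp (not_shorter q p hpq.symm)) (not_lt.mp (not_shorter p q hpq))
  refine ⟨List.ext_getElem hlen fun i hp hq => ?_, funext fun y => funext fun m => ?_⟩
  · rw [letter p (fun _ => default) i hp, letter q (fun _ => default) i hq, hpq]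
  · rw [← shift p y m, ← shift q y m, hpq, hlen]

variable {C : Transducer n}

lemma hmap_out_mk (q : C.Q) : hmap C (Quotient.mk (omegaSetoid C) q).out = hmap C q :=
  Quotient.mk_out (s := omegaSetoid C) q

variable (hC : OmegaCongruence C)
include hC

lemma quotT_out (a : A n) (q : C.Q) :
    (quotT C).out a (Quotient.mk (omegaSetoid C) q) = C.out a q :=
  (hC _ _ (hmap_out_mk q) a).1

lemma quotT_tr (a : A n) (q : C.Q) :
    (quotT C).tr a (Quotient.mk (omegaSetoid C) q) = Quotient.mk (omegaSetoid C) (C.tr a q) :=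
  Quotient.sound (hC _ _ (hmap_out_mk q) a).2

lemma quotT_dsts (w : Word n) (q : C.Q) :
    dsts (quotT C) w (Quotient.mk (omegaSetoid C) q) =
      Quotient.mk (omegaSetoid C) (dsts C w q) := by
  induction w generalizing q with
  | nil => rfl
  | cons a w ih => exact (congrArg (dsts (quotT C) w) (quotT_tr hC a q)).trans (ih _)

lemma quotT_outs (w : Word n) (q : C.Q) :
    outs (quotT C) w (Quotient.mk (omegaSetoid C) q) = outs C w q := by
  induction w generalizing q with
  | nil => rfl
  | cons a w ih =>
    exact congrArg₂ (· ++ ·) (quotT_out hC a q)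
      ((congrArg (outs (quotT C) w) (quotT_tr hC a q)).trans (ih _))

lemma quotT_hmap (q : C.Q) : hmap (quotT C) (Quotient.mk (omegaSetoid C) q) = hmap C q :=
  hmap_eq_of_outs_eq _ _ _ _ fun w => quotT_outs hC w q

lemma isCore_quotT (h : IsCore C) : IsCore (quotT C) :=
  h.of_surjective _ Quotient.mk_surjective fun w q => (quotT_dsts hC w q).symm

lemma noIncomplete_quotT (h : NoIncomplete C) : NoIncomplete (quotT C) := by
  intro c
  obtain ⟨q, rfl⟩ := Quotient.mk_surjective c
  simpa only [Disagree, quotT_hmap hC] using h q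

lemma weaklyMinimal_quotT : WeaklyMinimal (quotT C) := by
  intro c c' h
  obtain ⟨q, rfl⟩ := Quotient.mk_surjective c
  obtain ⟨q', rfl⟩ := Quotient.mk_surjective c'
  rw [quotT_hmap hC, quotT_hmap hC] at h
  exact Quotient.sound h

/-- A circuit labelled `Γ` in the quotient lifts, by pigeonhole on the iterates of `π(Γ, ·)`, to a
circuit of `C` labelled by a power of `Γ`. -/
lemma sl3_quotT (h : SL3 C) : SL3 (quotT C) := by
  intro c Γ hΓ
  obtain ⟨s, rfl⟩ := Quotient.mk_surjective c
  rw [quotT_dsts hC] at hΓ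
  rw [quotT_outs hC]
  have hclass : ∀ t, Quotient.mk (omegaSetoid C) ((dsts C Γ)^[t] s) = Quotient.mk _ s := by
    intro t
    induction t with
    | zero => rfl
    | succ t ih => rw [Function.iterate_succ_apply', ← quotT_dsts hC, ih, quotT_dsts hC, hΓ]
  have hlen : ∀ t, (outs C Γ ((dsts C Γ)^[t] s)).length = (outs C Γ s).length := fun t => by
    rw [← quotT_outs hC, hclass, quotT_outs hC]
  obtain ⟨i, j, hne, hij⟩ := Finite.exists_ne_map_eq_of_infinite fun t : ℕ => (dsts C Γ)^[t] s
  wlog hlt : i < j generalizing i j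
  · exact this j i hne.symm hij.symm (by omega)
  have hcirc : dsts C (List.replicate (j - i) Γ).flatten ((dsts C Γ)^[i] s) =
      (dsts C Γ)^[i] s := by
    rw [dsts_flatten_replicate, ← Function.iterate_add_apply, Nat.sub_add_cancel hlt.le]
    exact hij.symm
  have hpow := h _ _ hcirc
  rw [length_outs_flatten_replicate C (fun t => by rw [← Function.iterate_add_apply]; exact hlen _)]
    at hpow
  simp only [List.length_flatten, List.map_replicate, List.sum_replicate, smul_eq_mul] at hpow
  exact Nat.eq_of_mul_eq_mul_left (by omega) hpow

end Quotient

lemma slnMem_quotT {C : Transducer n} (hcore : IsCore C) (hni : NoIncomplete C) (hsl : SL3 C) :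
    SLnMem (quotT C) := by
  have hC := omegaCongruence_of_noIncomplete hni
  have hcore' := isCore_quotT hC hcore
  have hsl' := sl3_quotT hC hsl
  exact ⟨⟨hsl'.circuitsNonempty, hcore'.stronglySync, hcore',
    Or.inl ⟨noIncomplete_quotT hC hni, weaklyMinimal_quotT hC⟩⟩, hsl'⟩

lemma slnMem_minRep_of_finiteExtent {P : Transducer n} (hcore : IsCore P) (hsyn : Synchronous P)
    (hfin : ∀ q, FiniteExtent P q) : SLnMem (minRep P) := by
  have hR : IsCore (removeIncomplete P) :=
    hcore.of_surjective (T := P) (U := removeIncomplete P) id Function.surjective_id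
      fun w q => (dsts_removeIncomplete (P := P) w q).symm
  exact slnMem_quotT (isCore_coreT hR)
    (noIncomplete_coreT hR (noIncomplete_removeIncomplete hfin hsyn))
    (sl3_coreT hR (sl3_removeIncomplete hfin hsyn))

section InfiniteExtent

variable {T : Transducer n}

lemma hmap_eq_hmap_of_not_finiteExtent {q : T.Q} (h : ¬ FiniteExtent T q) (x y : ℕ → A n)
    (j : ℕ) : hmap T q x j = hmap T q y j :=
  not_not.mp fun hne => h ⟨j, x, y, hne⟩

lemma not_finiteExtent_of_isCore (hT : IsCore T) {q₀ : T.Q} (h : ¬ FiniteExtent T q₀)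
    (q : T.Q) : ¬ FiniteExtent T q := by
  obtain ⟨-, w, -, -, hw⟩ := hT q
  rintro ⟨j, hj⟩
  exact h ⟨_, disagree_of_disagree_dsts T w (by rwa [hw])⟩

lemma hmap_eq_of_forced (hsyn : Synchronous T) {w : Word n} {p : T.Q}
    (hw : ∀ r, dsts T w r = p) (r : T.Q) (x : ℕ → A n) (j : ℕ) :
    hmap T p x j = hmap T r (prepend w x) (w.length + j) := by
  rw [← hw r, ← hmap_prepend, length_outs_of_synchronous T hsyn]

/-- Forcing words of `p` and `p'` are padded on the left to a common length. -/
lemma hmap_eq_hmap_of_forall_not_finiteExtent (hT : IsCore T) (hsyn : Synchronous T)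
    (hinf : ∀ q, ¬ FiniteExtent T q) (p p' : T.Q) (x x' : ℕ → A n) (j : ℕ) :
    hmap T p x j = hmap T p' x' j := by
  have hpad {q : T.Q} {v : Word n} (hv : ∀ r, dsts T v r = q) (u : Word n) :
      ∀ r, dsts T (u ++ v) r = q := fun r => by rw [dsts_append, hv]
  obtain ⟨-, w, -, -, hw⟩ := hT p
  obtain ⟨-, w', -, -, hw'⟩ := hT p'
  have hlen : (List.replicate w'.length default ++ w).length =
      (List.replicate w.length default ++ w').length := by
    simp [Nat.add_comm]
  rw [hmap_eq_of_forced hsyn (hpad hw _) p x j, hmap_eq_of_forced hsyn (hpad hw' _) p x' j, hlen]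
  exact hmap_eq_hmap_of_not_finiteExtent (hinf p) _ _ _

lemma exists_hmap_eq_const (hT : IsCore T) (hsyn : Synchronous T) {q₀ : T.Q}
    (h : ¬ FiniteExtent T q₀) : ∃ c : A n, ∀ q x j, hmap T q x j = c := by
  have hinf := not_finiteExtent_of_isCore hT h
  have hsame := hmap_eq_hmap_of_forall_not_finiteExtent hT hsyn hinf
  refine ⟨hmap T q₀ (fun _ => default) 0, fun q x j => ?_⟩
  induction j with
  | zero => exact hsame _ _ _ _ _
  | succ j ih =>
    have hstep := hmap_prepend T [default] x q j
    rw [outs_singleton, hsyn default q] at hstep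
    calc hmap T q x (j + 1) = hmap T q (prepend [default] x) (1 + j) := by
          rw [Nat.add_comm]; exact hmap_eq_hmap_of_not_finiteExtent (hinf q) _ _ _
      _ = hmap T (T.tr default q) x j := hstep
      _ = hmap T q x j := hsame _ _ _ _ _
      _ = _ := ih

lemma periodicRoot_eq_of_hmap_eq_const {c : A n} (hc : ∀ q x j, hmap T q x j = c) :
    periodicRoot T = [c] := by
  have hper : ∃ m, 0 < m ∧ ∀ j, hmap T (Classical.choice T.ne) (fun _ => default) (j + m) =
      hmap T (Classical.choice T.ne) (fun _ => default) j :=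
    ⟨1, one_pos, fun j => by rw [hc, hc]⟩
  classical
  have hfind : Nat.find hper = 1 :=
    le_antisymm (Nat.find_min' hper ⟨one_pos, fun j => by rw [hc, hc]⟩) (Nat.find_spec hper).1
  unfold periodicRoot
  rw [dif_pos hper, hfind]
  simp [hc]

lemma out_removeIncomplete_of_not_forall (h : ¬ ∀ q, FiniteExtent T q) (a : A n) (q : T.Q) :
    (removeIncomplete T).out a q = minimalRot (periodicRoot T) :=
  if_neg h

end InfiniteExtent

section ConstantOutput

lemma outs_eq_of_out_eq_const {T U : Transducer n} {x : Word n} (hT : ∀ a q, T.out a q = x)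
    (hU : ∀ a q, U.out a q = x) (w : Word n) (q : T.Q) (q' : U.Q) : outs T w q = outs U w q' := by
  induction w generalizing q q' with
  | nil => rfl
  | cons a w ih => exact congrArg₂ (· ++ ·) ((hT a q).trans (hU a q').symm) (ih _ _)

lemma subsingleton_quotT_of_out_eq_const {C : Transducer n} {x : Word n}
    (hC : ∀ a q, C.out a q = x) : Subsingleton (quotT C).Q :=
  ⟨Quotient.ind₂ fun p q =>
    Quotient.sound (hmap_eq_of_outs_eq C C p q (outs_eq_of_out_eq_const hC hC · p q))⟩

lemma slnMem_of_subsingleton (T : Transducer n) [Subsingleton T.Q] {c : A n}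
    (hT : ∀ a q, T.out a q = [c]) : SLnMem T := by
  have hsync : SyncAt T 0 := fun _ _ _ _ => Subsingleton.elim _ _
  have hsl : SL3 T := fun q Γ _ =>
    length_outs_of_synchronous T (fun a q => by rw [hT]; rfl) Γ q
  refine ⟨⟨hsl.circuitsNonempty, ⟨0, hsync⟩, fun q => ⟨0, [], hsync, rfl,
    fun _ => Subsingleton.elim _ _⟩, Or.inr ⟨[c], ⟨List.cons_ne_nil _ _, ?_⟩, ?_, ?_⟩⟩, hsl⟩
  · rintro (_ | ⟨b, u⟩) k hk
    · simp at hk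
    · simp
  · simp [minimalRot]
  · exact ⟨⟨fun _ => PUnit.unit, fun _ => Classical.arbitrary T.Q,
      fun _ => Subsingleton.elim _ _, fun _ => rfl⟩,
      fun q => hmap_eq_of_outs_eq _ _ _ _
        fun w => outs_eq_of_out_eq_const hT (fun _ _ => rfl) w q _⟩

end ConstantOutput

lemma slnMem_minRep_of_not_finiteExtent {P : Transducer n} (hcore : IsCore P)
    (hsyn : Synchronous P) (hinf : ¬ ∀ q, FiniteExtent P q) : SLnMem (minRep P) := by
  obtain ⟨q₀, hq₀⟩ := not_forall.mp hinf
  obtain ⟨c, hc⟩ := exists_hmap_eq_const hcore hsyn hq₀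
  have hout (a : A n) (q : P.Q) : (removeIncomplete P).out a q = [c] := by
    rw [out_removeIncomplete_of_not_forall hinf, periodicRoot_eq_of_hmap_eq_const hc]
    simp [minimalRot]
  have : Subsingleton (minRep P).Q :=
    subsingleton_quotT_of_out_eq_const (C := coreT (removeIncomplete P)) fun a s => hout a s.1
  exact slnMem_of_subsingleton (minRep P) fun a s => hout a _

/-- For every `P ∈ \widetilde{P}_n`, the minimal representative `[P]`
of `P` satisfies the Lipschitz condition SL3, i.e. `[P] ∈ SL_n`.  In particular, if every
state of `P` has finite extent of incomplete response and `P'` denotes the transducer with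
the same states and transitions as `P` but outputs `λ'(a,q) = Λ(a,q) - Λ(ε,q)` (this is
`removeIncomplete P`), then for every state `p` and word `Γ` with `π_{P'}(Γ, p) = p` one
has `|λ'_{P'}(Γ, p)| = |Γ|`. -/
theorem minRep_of_Ptilde_mem_SLn (n : ℕ) (P : Transducer n) (hP : PtildeMem P) :
    SLnMem (minRep P) ∧
      ((∀ q : P.Q, FiniteExtent P q) →
        ∀ (p : P.Q) (Γ : Word n),
          dsts (removeIncomplete P) Γ p = p →
            (outs (removeIncomplete P) Γ p).length = Γ.length) := by
  obtain ⟨-, -, hcore, hsyn, -⟩ := hP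
  refine ⟨?_, fun hfin => sl3_removeIncomplete hfin hsyn⟩
  by_cases hfin : ∀ q, FiniteExtent P q
  · exact slnMem_minRep_of_finiteExtent hcore hsyn hfin
  · exact slnMem_minRep_of_not_finiteExtent hcore hsyn hfin

end ShiftPaper
end

section
/- Let φ : X_n^ℤ → X_n^ℤ be a continuous map commuting with the shift σ_n. If φ is injective on the set of σ_n-periodic points (the points x with σ_n^k(x) = x for some k ≥ 1), then φ is a homeomorphism, i.e. an automorphism of the shift dynamical system. -/
/-!
Common definitions: transducers over a finite alphabet, strong synchronization,
cores, ω-equivalence, minimal representatives, the monoids `M_n`, `SL_n`, `SO_n`,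
the groups `O_n`, `L_n`, annotations, and the two-sided full shift.

Throughout, the alphabet is `Fin (n + 2)`, i.e. an alphabet of size `n + 2 ≥ 2`.
-/

namespace ShiftPaper

variable {n : ℕ}

/-!
By compactness, `f` is a sliding block code: `f x p` only depends on `x` on `[p - r, p + r]`.
If `f x = f y` with `x ≠ y`, choose a block `[e, e + P)` containing a disagreement whose two
ends fit together: either both `x` and `y` repeat their first `2r` letters after `P` steps, or
`x` and `y` agree near both ends. Repeating the block periodically, every window of width
`2r + 1` is then a window of `(x, y)` or one on which the two repetitions agree, so they are
distinct periodic points with the same image. For surjectivity, `f` permutes the finite set of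
`k`-periodic points, so its closed range contains the dense set of periodic points.
-/

open Set Function Filter Topology

section Sequences

variable {α β : Type*}

theorem exists_dependsOn_Icc_of_continuous [TopologicalSpace α] [CompactSpace α] [T2Space α]
    [TopologicalSpace β] [DiscreteTopology β] {g : (ℤ → α) → β} (hg : Continuous g) :
    ∃ r : ℕ, DependsOn g (Icc (-r : ℤ) r) := by
  by_contra! h
  let K : ℕ → Set ((ℤ → α) × (ℤ → α)) := fun r =>
    (⋂ i ∈ Icc (-r : ℤ) r, {p | p.1 i = p.2 i}) ∩ (fun p => (g p.1, g p.2)) ⁻¹' {q | q.1 ≠ q.2}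
  have hK_closed (r : ℕ) : IsClosed (K r) :=
    (isClosed_biInter fun i _ => isClosed_eq (by fun_prop) (by fun_prop)).inter
      ((isClosed_discrete _).preimage (by fun_prop))
  have hK_anti (r : ℕ) : K (r + 1) ⊆ K r := by
    refine inter_subset_inter_left _ (biInter_subset_biInter_left fun i hi => ?_)
    exact ⟨by push_cast; linarith [hi.1], by push_cast; linarith [hi.2]⟩
  have hK_nonempty (r : ℕ) : (K r).Nonempty := by
    obtain ⟨x, y, hxy, hne⟩ : ∃ x y, (∀ i ∈ Icc (-r : ℤ) r, x i = y i) ∧ g x ≠ g y := by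
      simpa [DependsOn] using h r
    exact ⟨(x, y), mem_biInter hxy, hne⟩
  obtain ⟨p, hp⟩ := IsCompact.nonempty_iInter_of_sequence_nonempty_isCompact_isClosed K hK_anti
    hK_nonempty (hK_closed 0).isCompact hK_closed
  simp only [K, mem_iInter, mem_inter_iff, mem_preimage] at hp
  have hdiag : p.1 = p.2 := funext fun i => (hp i.natAbs).1 i ⟨by omega, by omega⟩
  exact (hp 0).2 (congrArg g hdiag)

def IsSlidingBlockCode (r : ℕ) (f : (ℤ → α) → (ℤ → β)) : Prop :=
  ∀ x y (p : ℤ), EqOn x y (Icc (p - r) (p + r)) → f x p = f y p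

theorem _root_.Function.Periodic.eq_of_eqOn_Ico {u v : ℤ → α} {P : ℤ} (hu : Periodic u P)
    (hv : Periodic v P) (hP : 0 < P) (c : ℤ) (h : EqOn u v (Ico c (c + P))) : u = v := by
  funext i
  rw [← hu.sub_zsmul_eq (toIcoDiv hP c i), ← hv.sub_zsmul_eq (toIcoDiv hP c i),
    self_sub_toIcoDiv_zsmul]
  exact h (toIcoMod_mem_Ico hP c i)

theorem finite_setOf_periodic [Finite α] {k : ℤ} (hk : 0 < k) :
    {z : ℤ → α | Periodic z k}.Finite := by
  refine Set.Finite.of_finite_image (f := (Ico 0 k).domRestrict) (Set.toFinite _) ?_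
  intro u hu v hv huv
  exact hu.eq_of_eqOn_Ico hv hk 0 (by simpa using domRestrict_eq_domRestrict_iff.1 huv)

noncomputable def periodize (z : ℤ → α) {P : ℤ} (hP : 0 < P) (e : ℤ) : ℤ → α :=
  fun i => z (toIcoMod hP e i)

section Periodize

variable (z : ℤ → α) {P : ℤ} (hP : 0 < P) (e : ℤ)

theorem periodize_periodic : Periodic (periodize z hP e) P :=
  fun i => congrArg z (toIcoMod_periodic hP e i)

theorem periodize_eqOn : EqOn (periodize z hP e) z (Ico e (e + P)) :=
  fun _ hi => congrArg z ((toIcoMod_eq_self hP).2 hi)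

theorem periodize_eqOn_of_forall_add_eq {m : ℕ} (h : ∀ i ∈ Ico e (e + m), z (i + P) = z i) :
    EqOn (periodize z hP e) z (Ico e (e + P + m)) := by
  induction m with
  | zero => simpa using periodize_eqOn z hP e
  | succ m ih =>
    intro i hi
    push_cast at hi h
    have h' : ∀ j ∈ Ico e (e + m), z (j + P) = z j := fun j hj => h j ⟨hj.1, by linarith [hj.2]⟩
    rcases lt_or_ge i (e + P + m) with hlt | hge
    · exact ih h' ⟨hi.1, hlt⟩
    · have hi' : i - P ∈ Ico e (e + P + m) := ⟨by linarith, by linarith [hi.2]⟩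
      rw [← (periodize_periodic z hP e).sub_eq, ih h' hi',
        ← h (i - P) ⟨by linarith, by linarith [hi.2]⟩, sub_add_cancel]

end Periodize

theorem dense_setOf_periodic [TopologicalSpace α] [DiscreteTopology α] :
    Dense {z : ℤ → α | ∃ k : ℕ, 0 < k ∧ Periodic z k} := by
  intro z
  have hP (N : ℕ) : (0 : ℤ) < 2 * N + 1 := by positivity
  refine mem_closure_of_tendsto (b := atTop) (f := fun N => periodize z (hP N) (-N)) ?_
    (Eventually.of_forall fun N =>
      ⟨2 * N + 1, by omega, by exact_mod_cast periodize_periodic z (hP N) (-N)⟩)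
  rw [tendsto_pi_nhds]
  intro i
  rw [nhds_discrete, tendsto_pure]
  filter_upwards [eventually_ge_atTop i.natAbs] with N hN
  exact periodize_eqOn z (hP N) (-N) ⟨by omega, by omega⟩

theorem surjective_of_injOn_periodic [Finite α] [TopologicalSpace α] [DiscreteTopology α]
    {f : (ℤ → α) → (ℤ → α)} (hf : Continuous f)
    (hper : ∀ (k : ℤ) (z : ℤ → α), Periodic z k → Periodic (f z) k)
    (hinj : InjOn f {z | ∃ k : ℕ, 0 < k ∧ Periodic z k}) :
    Surjective f := by
  have hperiodic : {z : ℤ → α | ∃ k : ℕ, 0 < k ∧ Periodic z k} ⊆ range f := by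
    rintro z ⟨k, hk, hz⟩
    have hk' : (0 : ℤ) < k := by exact_mod_cast hk
    have hbij := ((finite_setOf_periodic hk').injOn_iff_bijOn_of_mapsTo (hper k)).1
      (hinj.mono fun u hu => show ∃ k : ℕ, 0 < k ∧ Periodic u k from ⟨k, hk, hu⟩)
    obtain ⟨u, -, rfl⟩ := hbij.surjOn hz
    exact mem_range_self u
  refine range_eq_univ.1 (eq_univ_of_univ_subset ?_)
  rw [← dense_setOf_periodic.closure_eq]
  exact closure_minimal hperiodic (isCompact_range hf).isClosed

namespace IsSlidingBlockCode

variable {r : ℕ} {f : (ℤ → α) → (ℤ → β)} (hf : IsSlidingBlockCode r f)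
  (hper : ∀ (k : ℤ) (z : ℤ → α), Periodic z k → Periodic (f z) k)
include hf

theorem map_eq_map_of_eqOn {x y x' y' : ℤ → α} (hxy : f x = f y) {p : ℤ}
    (hx : EqOn x' x (Icc (p - r) (p + r))) (hy : EqOn y' y (Icc (p - r) (p + r))) :
    f x' p = f y' p := by
  rw [hf _ _ p hx, hxy, hf _ _ p hy]

include hper

theorem map_periodize_eq_of_forall_add_eq {x y : ℤ → α} (hxy : f x = f y) {P : ℤ} (hP : 0 < P)
    {e : ℤ} (hx : ∀ i ∈ Ico e (e + 2 * r), x (i + P) = x i)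
    (hy : ∀ i ∈ Ico e (e + 2 * r), y (i + P) = y i) :
    f (periodize x hP e) = f (periodize y hP e) := by
  refine (hper _ _ (periodize_periodic x hP e)).eq_of_eqOn_Ico
    (hper _ _ (periodize_periodic y hP e)) hP (e + r) fun p hp => ?_
  have hwin : Icc (p - r) (p + r) ⊆ Ico e (e + P + (2 * r : ℕ)) := fun i hi =>
    ⟨by linarith [hp.1, hi.1], by push_cast; linarith [hp.2, hi.2]⟩
  exact hf.map_eq_map_of_eqOn hxy
    ((periodize_eqOn_of_forall_add_eq x hP e (by push_cast; exact hx)).mono hwin)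
    ((periodize_eqOn_of_forall_add_eq y hP e (by push_cast; exact hy)).mono hwin)

theorem map_periodize_eq_of_eqOn {x y : ℤ → α} (hxy : f x = f y) {P : ℤ} (hP : 0 < P)
    (h2r : 2 * r ≤ P) {e : ℤ} (hleft : EqOn x y (Ico e (e + 2 * r)))
    (hright : EqOn x y (Ico (e + P - 2 * r) (e + P))) :
    f (periodize x hP e) = f (periodize y hP e) := by
  refine (hper _ _ (periodize_periodic x hP e)).eq_of_eqOn_Ico
    (hper _ _ (periodize_periodic y hP e)) hP (e + r) fun p hp => ?_
  rcases lt_or_ge (p + r) (e + P) with hin | hwrap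
  · have hwin : Icc (p - r) (p + r) ⊆ Ico e (e + P) := fun i hi =>
      ⟨by linarith [hp.1, hi.1], by linarith [hi.2]⟩
    exact hf.map_eq_map_of_eqOn hxy ((periodize_eqOn x hP e).mono hwin)
      ((periodize_eqOn y hP e).mono hwin)
  · refine hf _ _ p fun i hi => ?_
    rcases lt_or_ge i (e + P) with hi' | hi'
    · have hmem : i ∈ Ico e (e + P) := ⟨by linarith [hp.1, hi.1], hi'⟩
      rw [periodize_eqOn x hP e hmem, periodize_eqOn y hP e hmem]
      exact hright ⟨by linarith [hi.1], hi'⟩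
    · have hmem : i - P ∈ Ico e (e + P) := ⟨by linarith, by linarith [hp.2, hi.2]⟩
      rw [← (periodize_periodic x hP e).sub_eq, ← (periodize_periodic y hP e).sub_eq,
        periodize_eqOn x hP e hmem, periodize_eqOn y hP e hmem]
      exact hleft ⟨hmem.1, by linarith [hp.2, hi.2]⟩

theorem exists_periodize_ne_of_map_eq [Finite α] {x y : ℤ → α} (hxy : f x = f y) (hne : x ≠ y) :
    ∃ (P : ℤ) (hP : 0 < P) (e : ℤ),
      periodize x hP e ≠ periodize y hP e ∧ f (periodize x hP e) = f (periodize y hP e) := by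
  have hne_of_mem {P : ℤ} (hP : 0 < P) {e d : ℤ} (hd : d ∈ Ico e (e + P)) (hxyd : x d ≠ y d) :
      periodize x hP e ≠ periodize y hP e := fun h =>
    hxyd (by rw [← periodize_eqOn x hP e hd, h, periodize_eqOn y hP e hd])
  by_cases hD : {i | x i ≠ y i}.Finite
  -- the block is cut where `x` and `y` agree
  · obtain ⟨N, hN⟩ := (hD.image Int.natAbs).bddAbove
    have hagree (i : ℤ) (hi : N < i.natAbs) : x i = y i :=
      not_not.1 fun h => (hN (mem_image_of_mem _ h)).not_gt hi
    obtain ⟨d, hd⟩ := Function.ne_iff.1 hne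
    have hdN := hN (mem_image_of_mem _ hd)
    refine ⟨2 * N + 4 * r + 1, by positivity, -(N + 2 * r), hne_of_mem _ ⟨?_, ?_⟩ hd,
      hf.map_periodize_eq_of_eqOn hper hxy _ (by omega) (fun i hi => hagree i ?_)
        (fun i hi => hagree i ?_)⟩
    all_goals simp only [mem_Ico] at *; omega
  -- pigeonhole: at two disagreements `a < b` the pair `(x, y)` reads the same next `2r` letters
  · obtain ⟨a, ha, b, -, hab, hwin⟩ := Set.Infinite.exists_lt_map_eq_of_mapsTo hD
      (f := fun c (t : Ico (0 : ℤ) (2 * r)) => (x (c + t), y (c + t))) (mapsTo_univ _ _)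
      finite_univ
    have hrec (i : ℤ) (hi : i ∈ Ico a (a + 2 * r)) :
        x (i + (b - a)) = x i ∧ y (i + (b - a)) = y i := by
      have := congrFun hwin ⟨i - a, by constructor <;> linarith [hi.1, hi.2]⟩
      simp only [Prod.mk.injEq, add_sub_cancel] at this
      rw [show i + (b - a) = b + (i - a) by ring]
      exact ⟨this.1.symm, this.2.symm⟩
    exact ⟨b - a, sub_pos.2 hab, a, hne_of_mem _ ⟨le_rfl, by linarith⟩ ha,
      hf.map_periodize_eq_of_forall_add_eq hper hxy _ (fun i hi => (hrec i hi).1)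
        (fun i hi => (hrec i hi).2)⟩

theorem injective_of_injOn_periodic [Finite α]
    (hinj : InjOn f {z | ∃ k : ℕ, 0 < k ∧ Periodic z k}) : Injective f := by
  intro x y hxy
  by_contra hne
  obtain ⟨P, hP, e, hne', heq⟩ := hf.exists_periodize_ne_of_map_eq hper hxy hne
  have hmem (z : ℤ → α) : periodize z hP e ∈ {w : ℤ → α | ∃ k : ℕ, 0 < k ∧ Periodic w k} :=
    ⟨P.toNat, by omega, by simpa [Int.toNat_of_nonneg hP.le] using periodize_periodic z hP e⟩
  exact hne' (hinj (hmem x) (hmem y) heq)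

end IsSlidingBlockCode

end Sequences

section FullShift

theorem shiftZ_add (i k : ℤ) (x : FullShift n) : shiftZ i (shiftZ k x) = shiftZ (i + k) x := by
  funext j
  simp only [shiftZ, sub_sub]

theorem shiftZ_zero (x : FullShift n) : shiftZ 0 x = x := by
  funext j
  simp only [shiftZ, sub_zero]

theorem iterate_shiftZ_one (k : ℕ) (x : FullShift n) :
    (fun y => shiftZ 1 y)^[k] x = shiftZ k x := by
  induction k with
  | zero => exact (shiftZ_zero x).symm
  | succ k ih => rw [iterate_succ_apply', ih, shiftZ_add, Nat.cast_succ, add_comm]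

theorem shiftZ_eq_self_iff_periodic {k : ℤ} {x : FullShift n} :
    shiftZ k x = x ↔ Periodic x k := by
  refine ⟨fun h j => ?_, fun h => funext fun j => h.sub_eq j⟩
  simpa [shiftZ] using (congrFun h (j + k)).symm

variable {f : FullShift n → FullShift n} (hcomm : ∀ x, f (shiftZ 1 x) = shiftZ 1 (f x))
include hcomm

theorem map_shiftZ_of_commute (m : ℤ) (x : FullShift n) : f (shiftZ m x) = shiftZ m (f x) := by
  have hnat (k : ℕ) (x : FullShift n) : f (shiftZ k x) = shiftZ k (f x) := by
    rw [← iterate_shiftZ_one, ← iterate_shiftZ_one]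
    exact Commute.iterate_right hcomm k x
  obtain ⟨k, rfl | rfl⟩ := Int.eq_nat_or_neg m
  · exact hnat k x
  · have h := hnat k (shiftZ (-k) x)
    rw [shiftZ_add, add_neg_cancel, shiftZ_zero] at h
    rw [h, shiftZ_add, neg_add_cancel, shiftZ_zero]

theorem periodic_map_of_commute (k : ℤ) (x : FullShift n) (hx : Periodic x k) :
    Periodic (f x) k := by
  rw [← shiftZ_eq_self_iff_periodic] at hx ⊢
  rw [← map_shiftZ_of_commute hcomm, hx]

theorem exists_isSlidingBlockCode (hc : Continuous f) : ∃ r, IsSlidingBlockCode r f := by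
  obtain ⟨r, hr⟩ := exists_dependsOn_Icc_of_continuous ((continuous_apply 0).comp hc)
  refine ⟨r, fun x y p hxy => ?_⟩
  have hcoord (z : FullShift n) : f z p = f (shiftZ (-p) z) 0 := by
    rw [map_shiftZ_of_commute hcomm]
    simp [shiftZ]
  rw [hcoord x, hcoord y]
  exact hr fun i hi => hxy ⟨by linarith [hi.1], by linarith [hi.2]⟩

end FullShift

/-- Let `φ : X_n^ℤ → X_n^ℤ` be a continuous map commuting with the
shift `σ_n`.  If `φ` is injective on the set of `σ_n`-periodic points, then `φ` is a
homeomorphism, i.e. an automorphism of the shift dynamical system. -/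
theorem injOn_periodic_points_homeomorph (n : ℕ) (f : FullShift n → FullShift n)
    (hc : Continuous f) (hcomm : ∀ x, f (shiftZ 1 x) = shiftZ 1 (f x))
    (hinj : Set.InjOn f
      {x : FullShift n | ∃ k : ℕ, 0 < k ∧ (fun y => shiftZ 1 y)^[k] x = x}) :
    ∃ g : FullShift n ≃ₜ FullShift n, ∀ x, g x = f x := by
  have hper := periodic_map_of_commute hcomm
  have hinj' : InjOn f {z | ∃ k : ℕ, 0 < k ∧ Periodic z k} := by
    simpa only [iterate_shiftZ_one, shiftZ_eq_self_iff_periodic] using hinj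
  obtain ⟨r, hr⟩ := exists_isSlidingBlockCode hcomm hc
  have hbij : Bijective f :=
    ⟨hr.injective_of_injOn_periodic hper hinj', surjective_of_injOn_periodic hc hper hinj'⟩
  exact ⟨Continuous.homeoOfEquivCompactToT2 (f := Equiv.ofBijective f hbij) hc, fun _ => rfl⟩

end ShiftPaper
end
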